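/- arXiv:1104.4542 — 2 statements merged into one kernel-verified Lean document; each statement's English description precedes it below -/
import Mathlib

section
/- For n ≥ 2 and any k ≥ 0, the subgroup EL_n(π^k O) generated by elementary unipotents with entries in π^k O has finite index in SL_n(O). -/
open Matrix

/-
The kernel `Γ(J)` of reduction modulo `J = (π^k · π^(k+1))` has finite index because
`O ⧸ J` is finite, so it suffices to show `Γ(J) ≤ EL_n(π^k O)`. More generally let `x, y ∈ I`
with `x y` in the Jacobson radical and `J = (x y)`. A matrix `A ≡ 1 mod J` has unit diagonal
entries, so Gaussian elimination with transvections whose entries lie in `J ⊆ I` makes it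
diagonal. A diagonal matrix of determinant one which is `≡ 1 mod J` is a product of matrices
`diag(u, u⁻¹)` with `u = 1 + x z`, `z ∈ I`, and each of those is a product of four
transvections with entries in `I`.
-/

namespace Matrix

variable {ι R : Type*}

def IsDiagOutside [Zero R] (A : Matrix ι ι R) (s : Finset ι) : Prop :=
  ∀ i ∉ s, ∀ j, i ≠ j → A i j = 0 ∧ A j i = 0

theorem IsDiagOutside.isDiag [Zero R] {A : Matrix ι ι R} (hA : A.IsDiagOutside ∅) : A.IsDiag :=
  fun i j hij => (hA i (Finset.notMem_empty i) j hij).1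

theorem isDiagOutside_univ [Zero R] [Fintype ι] (A : Matrix ι ι R) :
    A.IsDiagOutside Finset.univ := by
  simp [IsDiagOutside]

variable [CommRing R] [DecidableEq ι]

-- `A p p` bordered by zeros, and the Schur complement of `A p p` in the remaining block.
def pivotAt (A : Matrix ι ι R) (p : ι) (v : R) : Matrix ι ι R :=
  of fun i j => if i = p ∨ j = p then (if i = j then A p p else 0) else A i j - A i p * v * A p j

theorem IsDiagOutside.pivotAt {A : Matrix ι ι R} {p : ι} {s : Finset ι}
    (hA : A.IsDiagOutside (insert p s)) (v : R) : (A.pivotAt p v).IsDiagOutside s := by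
  intro i hi j hij
  by_cases hip : i = p
  · subst hip
    simp [Matrix.pivotAt, hij, Ne.symm hij]
  · have hi' : i ∉ insert p s := by simp [hip, hi]
    obtain ⟨hij0, hji0⟩ := hA i hi' j hij
    obtain ⟨hip0, hpi0⟩ := hA i hi' p hip
    simp [Matrix.pivotAt, hip, hij, Ne.symm hij, hij0, hji0, hip0, hpi0]

variable [Fintype ι]

theorem one_add_sum_single_col_mul_apply (s : Finset ι) (p : ι) (c : ι → R)
    (M : Matrix ι ι R) (i j : ι) :
    ((1 + ∑ k ∈ s, single k p (c k)) * M) i j = M i j + if i ∈ s then c i * M p j else 0 := by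
  rw [add_mul, one_mul, Finset.sum_mul, add_apply, sum_apply]
  congr 1
  split_ifs with hi
  · rw [Finset.sum_eq_single_of_mem i hi fun k _ hk => single_mul_apply_of_ne _ _ _ _ _ hk.symm _,
      single_mul_apply_same]
  · exact Finset.sum_eq_zero fun k hk =>
      single_mul_apply_of_ne _ _ _ _ _ (by rintro rfl; exact hi hk) _

theorem mul_one_add_sum_single_row_apply (s : Finset ι) (p : ι) (c : ι → R)
    (M : Matrix ι ι R) (i j : ι) :
    (M * (1 + ∑ k ∈ s, single p k (c k))) i j = M i j + if j ∈ s then M i p * c j else 0 := by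
  rw [mul_add, mul_one, Finset.mul_sum, add_apply, sum_apply]
  congr 1
  split_ifs with hj
  · rw [Finset.sum_eq_single_of_mem j hj fun k _ hk => mul_single_apply_of_ne _ _ _ _ _ hk.symm _,
      mul_single_apply_same]
  · exact Finset.sum_eq_zero fun k hk =>
      mul_single_apply_of_ne _ _ _ _ _ (by rintro rfl; exact hj hk) _

end Matrix

namespace Matrix.SpecialLinearGroup

variable {ι R : Type*} [Fintype ι] [DecidableEq ι] [CommRing R]

def elementarySubgroup (I : Ideal R) : Subgroup (SpecialLinearGroup ι R) :=
  Subgroup.closure {A | ∃ (i j : ι) (hij : i ≠ j), ∃ b ∈ I, transvection hij b = A}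

def congruenceSubgroup (J : Ideal R) : Subgroup (SpecialLinearGroup ι R) :=
  (map (Ideal.Quotient.mk J)).ker

variable {I J : Ideal R}

theorem transvection_mem_elementarySubgroup {i j : ι} (hij : i ≠ j) {b : R} (hb : b ∈ I) :
    transvection hij b ∈ elementarySubgroup I :=
  Subgroup.subset_closure ⟨i, j, hij, b, hb, rfl⟩

theorem elementarySubgroup_mono (h : I ≤ J) :
    elementarySubgroup (ι := ι) I ≤ elementarySubgroup J :=
  Subgroup.closure_mono fun _ ⟨i, j, hij, b, hb, hA⟩ => ⟨i, j, hij, b, h hb, hA⟩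

theorem mem_congruenceSubgroup_iff {A : SpecialLinearGroup ι R} :
    A ∈ congruenceSubgroup J ↔ ∀ i j, A i j - (1 : Matrix ι ι R) i j ∈ J := by
  simp only [congruenceSubgroup, MonoidHom.mem_ker, SpecialLinearGroup.ext_iff, map_apply_coe,
    RingHom.mapMatrix_apply, map_apply, coe_one]
  refine forall₂_congr fun i j => ?_
  rw [← Ideal.Quotient.eq, one_apply, one_apply]
  split_ifs <;> simp

theorem sub_one_mem_of_mem_congruenceSubgroup {A : SpecialLinearGroup ι R}
    (hA : A ∈ congruenceSubgroup J) (i : ι) : A i i - 1 ∈ J := by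
  simpa using mem_congruenceSubgroup_iff.mp hA i i

theorem apply_mem_of_mem_congruenceSubgroup {A : SpecialLinearGroup ι R}
    (hA : A ∈ congruenceSubgroup J) {i j : ι} (hij : i ≠ j) : A i j ∈ J := by
  simpa [hij] using mem_congruenceSubgroup_iff.mp hA i j

theorem isUnit_apply_self_of_mem_congruenceSubgroup (hJ : J ≤ Ideal.jacobson ⊥)
    {A : SpecialLinearGroup ι R} (hA : A ∈ congruenceSubgroup J) (i : ι) : IsUnit (A i i) :=
  Ideal.isUnit_of_sub_one_mem_jacobson_bot _ (hJ (sub_one_mem_of_mem_congruenceSubgroup hA i))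

theorem elementarySubgroup_le_congruenceSubgroup :
    elementarySubgroup (ι := ι) J ≤ congruenceSubgroup J := by
  refine Subgroup.closure_le _ |>.mpr ?_
  rintro _ ⟨i, j, hij, b, hb, rfl⟩
  rw [SetLike.mem_coe, mem_congruenceSubgroup_iff]
  intro k l
  simp only [transvection_coe, add_apply, add_sub_cancel_left, single_apply]
  split_ifs <;> simp [hb]

instance [Finite (R ⧸ J)] : (congruenceSubgroup (ι := ι) J).FiniteIndex := by
  have : Fintype (R ⧸ J) := Fintype.ofFinite _
  have : DecidableEq (R ⧸ J) := Classical.decEq _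
  exact Subgroup.finiteIndex_ker _

theorem exists_mem_elementarySubgroup_coe_eq_one_add_sum_single_col (p : ι) {s : Finset ι}
    (hp : p ∉ s) {c : ι → R} (hc : ∀ i ∈ s, c i ∈ I) :
    ∃ L ∈ elementarySubgroup (ι := ι) I,
      (L : Matrix ι ι R) = 1 + ∑ i ∈ s, single i p (c i) := by
  induction s using Finset.induction_on with
  | empty => exact ⟨1, one_mem _, by simp⟩
  | insert m s hm ih =>
    rw [Finset.forall_mem_insert] at hc
    rw [Finset.mem_insert, not_or] at hp
    obtain ⟨L, hL, hLc⟩ := ih hp.2 hc.2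
    refine ⟨L * transvection (Ne.symm hp.1) (c m),
      mul_mem hL (transvection_mem_elementarySubgroup _ hc.1), ?_⟩
    simp only [coe_mul, hLc, transvection_coe, mul_add, mul_one, add_mul, one_mul,
      Finset.sum_mul, single_mul_single_of_ne _ _ _ _ hp.1, Finset.sum_const_zero, add_zero,
      Finset.sum_insert hm]
    abel

theorem exists_mem_elementarySubgroup_coe_eq_one_add_sum_single_row (p : ι) {s : Finset ι}
    (hp : p ∉ s) {c : ι → R} (hc : ∀ i ∈ s, c i ∈ I) :
    ∃ U ∈ elementarySubgroup (ι := ι) I,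
      (U : Matrix ι ι R) = 1 + ∑ i ∈ s, single p i (c i) := by
  induction s using Finset.induction_on with
  | empty => exact ⟨1, one_mem _, by simp⟩
  | insert m s hm ih =>
    rw [Finset.forall_mem_insert] at hc
    rw [Finset.mem_insert, not_or] at hp
    obtain ⟨U, hU, hUc⟩ := ih hp.2 hc.2
    refine ⟨transvection hp.1 (c m) * U,
      mul_mem (transvection_mem_elementarySubgroup _ hc.1) hU, ?_⟩
    simp only [coe_mul, transvection_coe, hUc, mul_add, mul_one, Finset.mul_sum, add_mul, one_mul,
      single_mul_single_of_ne _ _ _ _ (Ne.symm hp.1), add_zero, Finset.sum_insert hm]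
    abel

theorem exists_mul_mul_coe_eq_pivotAt (A : SpecialLinearGroup ι R) (p : ι) {v : R}
    (hv : A p p * v = 1) (hA : ∀ i, i ≠ p → A i p ∈ I ∧ A p i ∈ I) :
    ∃ L ∈ elementarySubgroup (ι := ι) I, ∃ U ∈ elementarySubgroup (ι := ι) I,
      ((L * A * U : SpecialLinearGroup ι R) : Matrix ι ι R) =
        (A : Matrix ι ι R).pivotAt p v := by
  have hp : p ∉ Finset.univ.erase p := Finset.notMem_erase p _
  obtain ⟨L, hL, hLc⟩ := exists_mem_elementarySubgroup_coe_eq_one_add_sum_single_col p hp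
    (c := fun i => -(A i p * v)) fun i hi =>
      I.neg_mem (I.mul_mem_right _ (hA i (Finset.ne_of_mem_erase hi)).1)
  obtain ⟨U, hU, hUc⟩ := exists_mem_elementarySubgroup_coe_eq_one_add_sum_single_row p hp
    (c := fun j => -(v * A p j)) fun j hj =>
      I.neg_mem (I.mul_mem_left _ (hA j (Finset.ne_of_mem_erase hj)).2)
  refine ⟨L, hL, U, hU, ?_⟩
  ext i j
  simp only [coe_mul, hLc, hUc, pivotAt, mul_one_add_sum_single_row_apply,
    one_add_sum_single_col_mul_apply, Finset.mem_erase, Finset.mem_univ, and_true, of_apply]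
  by_cases hi : i = p <;> by_cases hj : j = p <;>
    simp only [hi, hj, ne_eq, not_true_eq_false, not_false_eq_true, if_true, if_false, add_zero,
      or_self, or_false, or_true, mul_neg, neg_mul, @eq_comm _ p j]
  · linear_combination (-A p j) * hv
  · linear_combination (-A i p) * hv
  · linear_combination (A i p * v * A p j) * hv

theorem exists_mem_elementarySubgroup_coe_eq_diagonal {p q : ι} (hpq : p ≠ q) {x y u v : R}
    (hx : x ∈ I) (hy : y ∈ I) (hu : u - 1 ∈ Ideal.span {x * y}) (huv : u * v = 1) :
    ∃ W ∈ elementarySubgroup (ι := ι) I, (W : Matrix ι ι R) =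
      diagonal fun i => if i = p then u else if i = q then v else 1 := by
  obtain ⟨c, hc⟩ := Ideal.mem_span_singleton'.mp hu
  obtain rfl : u = 1 + x * (c * y) := by linear_combination -hc
  have hz : c * y ∈ I := I.mul_mem_left c hy
  -- in the `(p, q)` block, with `z = c y`:
  -- `!![1, 0; -z v, 1] * !![1, x; 0, 1] * !![1, 0; z, 1] * !![1, -x v; 0, 1]`
  -- `  = !![1 + x z, 0; 0, v]`
  refine ⟨transvection hpq.symm (-(c * y * v)) * transvection hpq x *
    transvection hpq.symm (c * y) * transvection hpq (-(x * v)), ?_, ?_⟩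
  · exact mul_mem (mul_mem (mul_mem
      (transvection_mem_elementarySubgroup _ (I.neg_mem (I.mul_mem_right _ hz)))
      (transvection_mem_elementarySubgroup _ hx)) (transvection_mem_elementarySubgroup _ hz))
      (transvection_mem_elementarySubgroup _ (I.neg_mem (I.mul_mem_right _ hx)))
  · simp only [coe_mul, transvection_coe, mul_add, add_mul, mul_one, one_mul,
      single_mul_single_same, single_mul_single_of_ne _ _ _ _ hpq,
      single_mul_single_of_ne _ _ _ _ hpq.symm, add_zero]
    ext i j
    simp only [single_apply, diagonal_apply, one_apply, add_apply]
    grind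

theorem exists_mul_isDiag_apply_self_eq_one {x y : R} (hx : x ∈ I) (hy : y ∈ I)
    (hxy : x * y ∈ Ideal.jacobson ⊥) {D : SpecialLinearGroup ι R}
    (hDJ : D ∈ congruenceSubgroup (Ideal.span {x * y})) (hD : (D : Matrix ι ι R).IsDiag)
    {p q : ι} (hpq : p ≠ q) :
    ∃ W ∈ elementarySubgroup (ι := ι) I, W * D ∈ congruenceSubgroup (Ideal.span {x * y}) ∧
      ((W * D : SpecialLinearGroup ι R) : Matrix ι ι R).IsDiag ∧
      (W * D : SpecialLinearGroup ι R) p p = 1 ∧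
      ∀ i, i ≠ p → i ≠ q → (W * D : SpecialLinearGroup ι R) i i = D i i := by
  set J := Ideal.span {x * y}
  have hDpp := sub_one_mem_of_mem_congruenceSubgroup hDJ p
  obtain ⟨v, hv⟩ := (isUnit_apply_self_of_mem_congruenceSubgroup
    ((Ideal.span_singleton_le_iff_mem _).mpr hxy) hDJ p).exists_left_inv
  have hv1 : v - 1 ∈ J := by
    simpa [mul_sub, hv] using J.neg_mem (J.mul_mem_left v hDpp)
  obtain ⟨W, hW, hWc⟩ := exists_mem_elementarySubgroup_coe_eq_diagonal hpq hx hy hv1 hv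
  have hWD : ∀ i j, (W * D : SpecialLinearGroup ι R) i j =
      (if i = p then v else if i = q then D p p else 1) * D i j := by
    intro i j
    rw [coe_mul, hWc, diagonal_mul]
  have hWJ : W ∈ congruenceSubgroup J := by
    rw [mem_congruenceSubgroup_iff, hWc]
    intro i j
    rcases eq_or_ne i j with rfl | hij
    · simp only [diagonal_apply_eq, one_apply_eq]
      split_ifs
      · exact hv1
      · exact hDpp
      · simp
    · simp [hij]
  refine ⟨W, hW, mul_mem hWJ hDJ, fun i j hij => (hWD i j).trans (by rw [hD hij, mul_zero]),
    by rw [hWD, if_pos rfl, hv], fun i hip hiq => ?_⟩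
  rw [hWD, if_neg hip, if_neg hiq, one_mul]

theorem mem_elementarySubgroup_of_isDiag {x y : R} (hx : x ∈ I) (hy : y ∈ I)
    (hxy : x * y ∈ Ideal.jacobson ⊥) {D : SpecialLinearGroup ι R}
    (hDJ : D ∈ congruenceSubgroup (Ideal.span {x * y})) (hD : (D : Matrix ι ι R).IsDiag) :
    D ∈ elementarySubgroup I := by
  suffices ∀ s : Finset ι, ∀ D ∈ congruenceSubgroup (ι := ι) (Ideal.span {x * y}),
      (D : Matrix ι ι R).IsDiag → (∀ i ∉ s, D i i = 1) → D ∈ elementarySubgroup I from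
    this Finset.univ D hDJ hD (by simp)
  intro s
  induction s using Finset.induction_on with
  | empty =>
    intro D _ hD hD1
    have : D = 1 := by
      ext i j
      by_cases hij : i = j
      · simp [hij, hD1 j (Finset.notMem_empty j)]
      · simp [hij, hD hij]
    exact this ▸ one_mem _
  | insert p s hp ih =>
    intro D hDJ hD hD1
    obtain rfl | ⟨q, hq⟩ := s.eq_empty_or_nonempty
    · have hD1' : ∀ i ≠ p, (D : Matrix ι ι R).diag i = 1 := fun i hi =>
        hD1 i (by simpa using hi)
      have hdet : D p p = 1 := by
        have := D.det_coe
        rwa [← hD.diagonal_diag, det_diagonal,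
          Finset.prod_eq_single p (fun i _ hi => hD1' i hi) (by simp)] at this
      refine ih D hDJ hD fun i _ => ?_
      by_cases hi : i = p
      · rw [hi, hdet]
      · exact hD1' i hi
    · have hpq : p ≠ q := by rintro rfl; exact hp hq
      obtain ⟨W, hW, hWDJ, hWD, hWDp, hWDi⟩ :=
        exists_mul_isDiag_apply_self_eq_one hx hy hxy hDJ hD hpq
      have hWD1 : ∀ i ∉ s, (W * D : SpecialLinearGroup ι R) i i = 1 := by
        intro i hi
        by_cases hip : i = p
        · rw [hip, hWDp]
        · have hiq : i ≠ q := by rintro rfl; exact hi hq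
          rw [hWDi i hip hiq, hD1 i (by simp [hip, hi])]
      simpa using mul_mem (inv_mem hW) (ih (W * D) hWDJ hWD hWD1)

theorem exists_mul_mul_isDiag (hJ : J ≤ Ideal.jacobson ⊥) {A : SpecialLinearGroup ι R}
    (hA : A ∈ congruenceSubgroup J) :
    ∃ L ∈ elementarySubgroup (ι := ι) J, ∃ U ∈ elementarySubgroup (ι := ι) J,
      ((L * A * U : SpecialLinearGroup ι R) : Matrix ι ι R).IsDiag := by
  suffices ∀ s : Finset ι, ∀ A ∈ congruenceSubgroup (ι := ι) J,
      (A : Matrix ι ι R).IsDiagOutside s →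
      ∃ L ∈ elementarySubgroup (ι := ι) J, ∃ U ∈ elementarySubgroup (ι := ι) J,
        ((L * A * U : SpecialLinearGroup ι R) : Matrix ι ι R).IsDiag from
    this Finset.univ A hA (isDiagOutside_univ _)
  intro s
  induction s using Finset.induction_on with
  | empty => exact fun A _ hA0 => ⟨1, one_mem _, 1, one_mem _, by simpa using hA0.isDiag⟩
  | insert p s hp ih =>
    intro A hA hA0
    obtain ⟨v, hv⟩ := (isUnit_apply_self_of_mem_congruenceSubgroup hJ hA p).exists_right_inv
    obtain ⟨L, hL, U, hU, hLAU⟩ := exists_mul_mul_coe_eq_pivotAt A p hv fun i hi =>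
      ⟨apply_mem_of_mem_congruenceSubgroup hA hi,
        apply_mem_of_mem_congruenceSubgroup hA hi.symm⟩
    have hB : L * A * U ∈ congruenceSubgroup J :=
      mul_mem (mul_mem (elementarySubgroup_le_congruenceSubgroup hL) hA)
        (elementarySubgroup_le_congruenceSubgroup hU)
    obtain ⟨L', hL', U', hU', hdiag⟩ := ih (L * A * U) hB (hLAU ▸ hA0.pivotAt v)
    exact ⟨L' * L, mul_mem hL' hL, U * U', mul_mem hU hU',
      by simpa only [mul_assoc] using hdiag⟩

theorem congruenceSubgroup_le_elementarySubgroup {x y : R} (hx : x ∈ I) (hy : y ∈ I)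
    (hxy : x * y ∈ Ideal.jacobson ⊥) :
    congruenceSubgroup (ι := ι) (Ideal.span {x * y}) ≤ elementarySubgroup I := by
  intro A hA
  have hJI : Ideal.span {x * y} ≤ I :=
    (Ideal.span_singleton_le_iff_mem _).mpr (I.mul_mem_right y hx)
  obtain ⟨L, hL, U, hU, hD⟩ :=
    exists_mul_mul_isDiag ((Ideal.span_singleton_le_iff_mem _).mpr hxy) hA
  have hLAU := mem_elementarySubgroup_of_isDiag hx hy hxy
    (mul_mem (mul_mem (elementarySubgroup_le_congruenceSubgroup hL) hA)
      (elementarySubgroup_le_congruenceSubgroup hU)) hD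
  rw [show A = L⁻¹ * (L * A * U) * U⁻¹ by group]
  exact mul_mem (mul_mem (inv_mem (elementarySubgroup_mono hJI hL)) hLAU)
    (inv_mem (elementarySubgroup_mono hJI hU))

end Matrix.SpecialLinearGroup

theorem stmt_8_general (O : Type*) [CommRing O] [IsDomain O] [IsDiscreteValuationRing O]
    [Finite (O ⧸ IsLocalRing.maximalIdeal O)]
    (π : O) (hπ : Irreducible π) (n : ℕ) (k : ℕ) :
    (Subgroup.closure
      {A : Matrix.SpecialLinearGroup (Fin n) O |
        ∃ (i j : Fin n) (x : O), i ≠ j ∧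
          (A : Matrix (Fin n) (Fin n) O) = 1 + Matrix.single i j (π ^ k * x)}).FiniteIndex := by
  have hπk : π ^ k ∈ Ideal.span {π ^ k} := Ideal.mem_span_singleton_self _
  have hπk1 : π ^ (k + 1) ∈ Ideal.span {π ^ k} :=
    Ideal.mem_span_singleton.mpr (pow_dvd_pow π k.le_succ)
  have hjac : π ^ k * π ^ (k + 1) ∈ Ideal.jacobson ⊥ := by
    rw [IsLocalRing.jacobson_eq_maximalIdeal ⊥ bot_ne_top, hπ.maximalIdeal_eq]
    exact Ideal.mul_mem_left _ _ (Ideal.mem_span_singleton.mpr (dvd_pow_self π k.succ_ne_zero))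
  have : Finite (O ⧸ Ideal.span {π ^ k * π ^ (k + 1)}) := by
    rw [← pow_add, ← Ideal.span_singleton_pow, ← hπ.maximalIdeal_eq]
    exact Ideal.finite_quotient_pow (IsNoetherian.noetherian _) _
  refine Subgroup.finiteIndex_of_le
    ((SpecialLinearGroup.congruenceSubgroup_le_elementarySubgroup hπk hπk1 hjac).trans ?_)
  refine Subgroup.closure_le _ |>.mpr ?_
  rintro _ ⟨i, j, hij, b, hb, rfl⟩
  obtain ⟨x, rfl⟩ := Ideal.mem_span_singleton.mp hb
  exact Subgroup.subset_closure ⟨i, j, x, hij, rfl⟩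

/-- EL_n(π^k O) has finite index in SL_n(O) for a complete discrete
valuation ring O with finite residue field. -/
theorem stmt_8 (O : Type*) [CommRing O] [IsDomain O] [IsDiscreteValuationRing O]
    [IsAdicComplete (IsLocalRing.maximalIdeal O) O]
    [Finite (O ⧸ IsLocalRing.maximalIdeal O)]
    (π : O) (hπ : Irreducible π) (n : ℕ) (hn : 2 ≤ n) (k : ℕ) :
    (Subgroup.closure
      {A : Matrix.SpecialLinearGroup (Fin n) O |
        ∃ (i j : Fin n) (x : O), i ≠ j ∧
          (A : Matrix (Fin n) (Fin n) O) = 1 + Matrix.single i j (π ^ k * x)}).FiniteIndex :=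
  stmt_8_general O π hπ n k
end

section
/- If O is a complete discrete valuation ring whose residue field has more than 3 elements, then SL_2(O) is a perfect group. -/
/-!
Conjugating by `diag(u, u⁻¹)` multiplies the off-diagonal entry of a transvection by `u^2`
(or `u^-2`), so `⁅diag(u, u⁻¹), 1 + b E₁₂⁆ = 1 + b (u^2 - 1) E₁₂`; once `u^2 - 1` is a unit, every
transvection is a commutator. Over a local ring, the first column of a matrix in `SL₂` is
unimodular, so after one row operation its top entry is a unit, and then the matrix factors as
lower unitriangular × diagonal × upper unitriangular; the diagonal factor is itself a product of
transvections. Hence `SL₂` is generated by transvections and is perfect. A residue class other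
than `0, ±1`, which exists as the residue field has more than three elements, lifts to the
required unit `u`.
-/

open Matrix MatrixGroups
open scoped commutatorElement

theorem exists_ne_zero_sq_ne_one_of_three_lt_card {K : Type*} [Ring K] [NoZeroDivisors K]
    (h : 3 < Nat.card K) : ∃ a : K, a ≠ 0 ∧ a ^ 2 ≠ 1 := by
  classical
  have : Finite K := Nat.finite_of_card_ne_zero (by omega)
  have hlt : (([0, 1, -1] : List K).toFinset.card : ℕ∞) < ENat.card K := by
    rw [ENat.card_eq_coe_natCard]
    exact_mod_cast (List.toFinset_card_le _).trans_lt h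
  obtain ⟨a, ha⟩ := Finset.exists_not_mem_of_card_lt_enatCard hlt
  simp only [List.toFinset_cons, List.toFinset_nil, insert_empty_eq, Finset.mem_insert,
    Finset.mem_singleton, not_or] at ha
  exact ⟨a, ha.1, sq_ne_one_iff.2 ha.2⟩

theorem IsLocalRing.exists_isUnit_sq_sub_one_of_three_lt_card {R : Type*} [CommRing R]
    [IsLocalRing R] (h : 3 < Nat.card (ResidueField R)) : ∃ u : Rˣ, IsUnit ((u : R) ^ 2 - 1) := by
  obtain ⟨a, ha0, ha1⟩ := exists_ne_zero_sq_ne_one_of_three_lt_card h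
  obtain ⟨x, rfl⟩ := residue_surjective a
  refine ⟨((residue_ne_zero_iff_isUnit x).1 ha0).unit, (residue_ne_zero_iff_isUnit _).1 ?_⟩
  simpa [sub_eq_zero] using ha1

theorem IsLocalRing.isUnit_or_isUnit_of_isCoprime {R : Type*} [CommRing R] [IsLocalRing R]
    {a b : R} (h : IsCoprime a b) : IsUnit a ∨ IsUnit b := by
  obtain ⟨x, y, hxy⟩ := h
  exact (isUnit_or_isUnit_of_isUnit_add (hxy ▸ isUnit_one)).imp
    isUnit_of_mul_isUnit_right isUnit_of_mul_isUnit_right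

namespace Matrix.SpecialLinearGroup

variable {R : Type*} [CommRing R]

lemma transvection_zero_one_coe (b : R) :
    ((transvection zero_ne_one b : SL(2, R)) : Matrix (Fin 2) (Fin 2) R) = !![1, b; 0, 1] := by
  ext i j; fin_cases i <;> fin_cases j <;> simp [transvection_coe]

lemma transvection_one_zero_coe (b : R) :
    ((transvection one_ne_zero b : SL(2, R)) : Matrix (Fin 2) (Fin 2) R) = !![1, 0; b, 1] := by
  ext i j; fin_cases i <;> fin_cases j <;> simp [transvection_coe]

def diagUnit (u : Rˣ) : SL(2, R) :=
  ⟨!![(u : R), 0; 0, ↑u⁻¹], by simp [det_fin_two_of]⟩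

lemma diagUnit_coe (u : Rˣ) : (diagUnit u : Matrix (Fin 2) (Fin 2) R) = !![(u : R), 0; 0, ↑u⁻¹] :=
  rfl

lemma diagUnit_inv (u : Rˣ) : (diagUnit u)⁻¹ = diagUnit u⁻¹ :=
  inv_eq_of_mul_eq_one_right <| Subtype.ext <| by
    simp [diagUnit_coe, ← one_fin_two]

lemma commutator_diagUnit_transvection_zero_one (u : Rˣ) (b : R) :
    ⁅diagUnit u, transvection zero_ne_one b⁆ =
      (transvection zero_ne_one (b * ((u : R) ^ 2 - 1)) : SL(2, R)) := by
  rw [commutatorElement_def, diagUnit_inv, transvection_inv]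
  refine Subtype.ext ?_
  simp [diagUnit_coe, transvection_zero_one_coe]
  ring

lemma commutator_diagUnit_inv_transvection_one_zero (u : Rˣ) (b : R) :
    ⁅diagUnit u⁻¹, transvection one_ne_zero b⁆ =
      (transvection one_ne_zero (b * ((u : R) ^ 2 - 1)) : SL(2, R)) := by
  rw [commutatorElement_def, diagUnit_inv, transvection_inv]
  refine Subtype.ext ?_
  simp [diagUnit_coe, transvection_one_zero_coe]
  ring

-- `w u * w (-1)`, where `w u = !![0, u; -u⁻¹, 0]` is the product of the first three factors.
lemma diagUnit_eq_transvection_prod (u : Rˣ) :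
    diagUnit u = transvection zero_ne_one (u : R) * transvection one_ne_zero (-((u⁻¹ : Rˣ) : R)) *
      transvection zero_ne_one (u : R) * transvection zero_ne_one (-1) *
      transvection one_ne_zero 1 * transvection zero_ne_one (-1) := by
  refine Subtype.ext ?_
  simp [diagUnit_coe, transvection_one_zero_coe, transvection_zero_one_coe]

lemma eq_transvection_mul_diagUnit_mul_transvection (A : SL(2, R)) (u : Rˣ) (hu : A 0 0 = u) :
    A = transvection one_ne_zero (A 1 0 * ↑u⁻¹) * diagUnit u *
      transvection zero_ne_one (↑u⁻¹ * A 0 1) := by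
  have hdet : A 0 0 * A 1 1 - A 0 1 * A 1 0 = 1 := by
    rw [← det_fin_two]; exact A.det_coe
  refine Subtype.ext ?_
  simp only [coe_mul, diagUnit_coe, transvection_one_zero_coe, transvection_zero_one_coe,
    mul_fin_two]
  rw [eta_fin_two (A : Matrix (Fin 2) (Fin 2) R)]
  ext i j
  fin_cases i <;> fin_cases j <;> simp
  · exact hu
  · rw [hu] at hdet
    linear_combination (↑u⁻¹ : R) * hdet - A 1 1 * u.inv_mul

lemma transvection_mem_commutator_of_isUnit_sq_sub_one {u : Rˣ} (hu : IsUnit ((u : R) ^ 2 - 1))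
    {i j : Fin 2} (hij : i ≠ j) (c : R) : transvection hij c ∈ commutator SL(2, R) := by
  obtain ⟨v, hv⟩ := hu
  have hc : c = c * ↑v⁻¹ * ((u : R) ^ 2 - 1) := by rw [← hv, mul_assoc, v.inv_mul, mul_one]
  fin_cases i <;> fin_cases j
  · exact absurd rfl hij
  · rw [hc, ← commutator_diagUnit_transvection_zero_one]
    exact Subgroup.commutator_mem_commutator (Subgroup.mem_top _) (Subgroup.mem_top _)
  · rw [hc, ← commutator_diagUnit_inv_transvection_one_zero]
    exact Subgroup.commutator_mem_commutator (Subgroup.mem_top _) (Subgroup.mem_top _)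
  · exact absurd rfl hij

lemma transvection_zero_one_mul_apply_zero_zero (b : R) (A : SL(2, R)) :
    (transvection zero_ne_one b * A : SL(2, R)) 0 0 = A 0 0 + b * A 1 0 := by
  simp [transvection_zero_one_coe, mul_apply, Fin.sum_univ_two]

theorem _root_.Matrix.SL2.transvection_induction_of_isLocalRing [IsLocalRing R]
    (P : SL(2, R) → Prop)
    (htransvec : ∀ (i j : Fin 2) (h : i ≠ j) c, P (transvection h c))
    (hmul : ∀ A B, P A → P B → P (A * B)) (A : SL(2, R)) : P A := by
  have hdiag (u : Rˣ) : P (diagUnit u) := by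
    rw [diagUnit_eq_transvection_prod]
    refine hmul _ _ (hmul _ _ (hmul _ _ (hmul _ _ (hmul _ _ ?_ ?_) ?_) ?_) ?_) ?_
    all_goals exact htransvec _ _ _ _
  have hunit (B : SL(2, R)) (hB : IsUnit (B 0 0)) : P B := by
    rw [eq_transvection_mul_diagUnit_mul_transvection B hB.unit hB.unit_spec.symm]
    exact hmul _ _ (hmul _ _ (htransvec _ _ _ _) (hdiag _)) (htransvec _ _ _ _)
  have hcop : IsCoprime (A 0 0) ((transvection zero_ne_one (1 : R) * A : SL(2, R)) 0 0) := by
    simpa [transvection_zero_one_mul_apply_zero_zero, add_comm] using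
      (isCoprime_col A 0).add_mul_left_right 1
  obtain hA | hA := IsLocalRing.isUnit_or_isUnit_of_isCoprime hcop
  · exact hunit A hA
  · rw [← inv_mul_cancel_left (transvection zero_ne_one (1 : R)) A, transvection_inv]
    exact hmul _ _ (htransvec _ _ _ _) (hunit _ hA)

theorem _root_.Matrix.SL2.commutator_eq_top_of_isLocalRing [IsLocalRing R] {u : Rˣ}
    (hu : IsUnit ((u : R) ^ 2 - 1)) : commutator SL(2, R) = ⊤ :=
  eq_top_iff.2 fun A _ ↦ SL2.transvection_induction_of_isLocalRing _
    (fun _ _ ↦ transvection_mem_commutator_of_isUnit_sq_sub_one hu) (fun _ _ ↦ mul_mem) A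

end Matrix.SpecialLinearGroup

theorem stmt_12_general (O : Type*) [CommRing O] [IsDomain O] [IsDiscreteValuationRing O]
    (hcard : 3 < Nat.card (O ⧸ IsLocalRing.maximalIdeal O)) :
    commutator (Matrix.SpecialLinearGroup (Fin 2) O) = ⊤ := by
  obtain ⟨u, hu⟩ := IsLocalRing.exists_isUnit_sq_sub_one_of_three_lt_card hcard
  exact SL2.commutator_eq_top_of_isLocalRing hu

/-- SL₂ of a complete discrete valuation ring whose (finite) residue
field has more than 3 elements is perfect. -/
theorem stmt_12 (O : Type*) [CommRing O] [IsDomain O] [IsDiscreteValuationRing O]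
    [IsAdicComplete (IsLocalRing.maximalIdeal O) O]
    [Finite (O ⧸ IsLocalRing.maximalIdeal O)]
    (hcard : 3 < Nat.card (O ⧸ IsLocalRing.maximalIdeal O)) :
    commutator (Matrix.SpecialLinearGroup (Fin 2) O) = ⊤ :=
  stmt_12_general O hcard
end
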